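/- arXiv:2006.16871 — 4 statements merged into one kernel-verified Lean document; each statement's English description precedes it below -/
import Mathlib

section
/- With x_n and y_n defined as in the biorthogonal construction (x_{2n}=e_{2n}, x_{2n+1}=e_{2n+1}−a_n e_{2n}+b_n e_{2n−2}, y_{2n}=e_{2n}+a_n e_{2n+1}−b_{n+1} e_{2n+3}, y_{2n+1}=e_{2n+1}), the linear span of {x_n : n ≥ 0} is dense in ℓ²(ℤ⁺). -/
/-- The standard unit vector basis of `ℓ²(ℤ⁺)`. -/
noncomputable def e (n : ℕ) : lp (fun _ : ℕ => ℂ) 2 := lp.single 2 n 1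

theorem dense_span_e : Dense (Submodule.span ℂ (Set.range e) : Set (lp (fun _ : ℕ => ℂ) 2)) := by
  rw [dense_iff_closure_eq, Set.eq_univ_iff_forall]
  intro f
  have hsum := lp.hasSum_single (E := fun _ : ℕ => ℂ) ENNReal.ofNat_ne_top f
  refine mem_closure_of_tendsto hsum (Filter.Eventually.of_forall fun s => ?_)
  refine Submodule.sum_mem _ fun i _ => ?_
  have : lp.single (E := fun _ : ℕ => ℂ) 2 i (f i) = f i • e i := by
    rw [e, ← lp.single_smul]
    norm_num
  rw [this]
  exact Submodule.smul_mem _ _ (Submodule.subset_span ⟨i, rfl⟩)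

/-- The linear span of the `x_n` is dense in `ℓ²(ℤ⁺)`. -/
theorem stmt1 (a b : ℕ → ℂ) (x : ℕ → lp (fun _ : ℕ => ℂ) 2)
    (hx_even : ∀ n, x (2 * n) = e (2 * n))
    (hx_odd0 : x 1 = e 1 - a 0 • e 0)
    (hx_odd : ∀ n, x (2 * (n + 1) + 1)
      = e (2 * (n + 1) + 1) - a (n + 1) • e (2 * (n + 1)) + b (n + 1) • e (2 * n)) :
    Dense (Submodule.span ℂ (Set.range x) : Set (lp (fun _ : ℕ => ℂ) 2)) := by
  set S := Submodule.span ℂ (Set.range x) with hS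
  have hxmem : ∀ n, x n ∈ S := fun n => Submodule.subset_span ⟨n, rfl⟩
  have heven : ∀ n, e (2 * n) ∈ S := fun n => hx_even n ▸ hxmem (2 * n)
  have hodd : ∀ n, e (2 * n + 1) ∈ S := by
    intro n
    induction n with
    | zero =>
      have : e 1 = x 1 + a 0 • e 0 := by rw [hx_odd0]; abel
      have h0 : e 0 ∈ S := heven 0
      rw [this]; exact S.add_mem (hxmem 1) (S.smul_mem (a 0) h0)
    | succ n ih =>
      have : e (2 * (n + 1) + 1)
          = x (2 * (n + 1) + 1) + a (n + 1) • e (2 * (n + 1)) - b (n + 1) • e (2 * n) := by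
        rw [hx_odd n]; abel
      rw [this]
      exact S.sub_mem (S.add_mem (hxmem _) (S.smul_mem _ (heven (n + 1))))
        (S.smul_mem _ (heven n))
  have he : ∀ n, e n ∈ S := by
    intro n
    rcases Nat.even_or_odd n with ⟨k, hk⟩ | ⟨k, hk⟩
    · subst hk; simpa [two_mul] using heven k
    · subst hk; exact hodd k
  have hle : Submodule.span ℂ (Set.range e) ≤ S := by
    rw [Submodule.span_le]; rintro _ ⟨n, rfl⟩; exact he n
  exact dense_span_e.mono hle
end

section
/- There exists a Hilbert holomorphic function space H on the unit disk in which the polynomials are dense, and a function f ∈ H, such that f does not lie in the closed linear span of its Taylor partial sums {s_n(f) : n ≥ 0}. Consequently, there is no sequence of linear maps T_n : H → H of the form T_n(f) = Σ_{k=0}^n c_{nk} s_k(f) (for any triangular array of complex numbers c_{nk}) with ‖T_n(f) − f‖_H → 0. -/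
/-!
Take `H = ℓ²(ℕ)` and identify `y ∈ H` with the holomorphic function whose Taylor coefficients
are `2⁻ᵐ cₘ(y)`, where `c₂ⱼ(y) = y₂ⱼ₊₂` and `c₂ⱼ₊₁(y) = y₀ + y₂ⱼ₊₁ + ∑_{i ≤ j} y₂ᵢ₊₂`. The
weights make the coefficients absolutely summable, so this is an injective embedding with bounded
point evaluations. The odd function `f = e₀` has odd partial sums, which are combinations of the
`e₂ⱼ₊₁` and so lie in the closed hyperplane `y₀ = 0`, while `f` does not. The even monomials,
however, reach `e₀` through the unbounded functional `y ↦ y₀ + ∑ y₂ᵢ₊₂`: a vector orthogonal to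
every monomial has vanishing odd coordinates and constant even ones, so it is zero, and the
polynomials are dense.
-/

open Metric Filter Topology

noncomputable section

/-- Set to `0` off the open disk, so that `diskSum` is additive without summability side
conditions there. -/
def diskSum (c : ℕ → ℂ) (z : ℂ) : ℂ := if ‖z‖ < 1 then ∑' m, c m * z ^ m else 0

section DiskSum

variable {c d : ℕ → ℂ} {z : ℂ}

theorem norm_mul_pow_le_of_norm_le_one (c : ℕ → ℂ) (hz : ‖z‖ ≤ 1) (m : ℕ) :
    ‖c m * z ^ m‖ ≤ ‖c m‖ := by
  rw [norm_mul, norm_pow]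
  exact mul_le_of_le_one_right (norm_nonneg _) (pow_le_one₀ (norm_nonneg _) hz)

theorem summable_norm_mul_pow (hc : Summable fun m => ‖c m‖) (hz : ‖z‖ ≤ 1) :
    Summable fun m => ‖c m * z ^ m‖ :=
  hc.of_nonneg_of_le (fun _ => norm_nonneg _) (norm_mul_pow_le_of_norm_le_one c hz)

theorem hasSum_diskSum (hc : Summable fun m => ‖c m‖) (hz : ‖z‖ < 1) :
    HasSum (fun m => c m * z ^ m) (diskSum c z) := by
  rw [diskSum, if_pos hz]
  exact (summable_norm_mul_pow hc hz.le).of_norm.hasSum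

theorem diskSum_add (hc : Summable fun m => ‖c m‖) (hd : Summable fun m => ‖d m‖) :
    diskSum (c + d) = diskSum c + diskSum d := by
  ext z
  by_cases hz : ‖z‖ < 1
  · refine (hasSum_diskSum (hc.add hd |>.of_nonneg_of_le (fun _ => norm_nonneg _)
      fun m => norm_add_le _ _) hz).unique ?_
    simpa [add_mul] using (hasSum_diskSum hc hz).add (hasSum_diskSum hd hz)
  · simp [diskSum, hz]

theorem diskSum_smul (a : ℂ) (c : ℕ → ℂ) : diskSum (a • c) = a • diskSum c := by
  ext z
  simp only [diskSum, Pi.smul_apply, smul_eq_mul, mul_assoc, tsum_mul_left]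
  split_ifs <;> simp

theorem norm_diskSum_le (hc : Summable fun m => ‖c m‖) (z : ℂ) :
    ‖diskSum c z‖ ≤ ∑' m, ‖c m‖ := by
  by_cases hz : ‖z‖ < 1
  · exact (hasSum_diskSum hc hz).norm_le_of_bounded hc.hasSum
      (norm_mul_pow_le_of_norm_le_one c hz.le)
  · simpa [diskSum, hz] using tsum_nonneg fun m => norm_nonneg (c m)

theorem diskSum_single (m : ℕ) (a : ℂ) (hz : ‖z‖ < 1) : diskSum (Pi.single m a) z = a * z ^ m := by
  rw [diskSum, if_pos hz, tsum_eq_single m fun n hn => by simp [hn]]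
  simp

theorem eball_zero_one : eball (0 : ℂ) 1 = ball 0 1 := by
  simpa using Metric.eball_coe (x := (0 : ℂ)) (ε := 1)

theorem hasFPowerSeriesOnBall_diskSum (hc : Summable fun m => ‖c m‖) :
    HasFPowerSeriesOnBall (diskSum c) (FormalMultilinearSeries.ofScalars ℂ c) 0 1 where
  r_le := by
    have := (FormalMultilinearSeries.ofScalars ℂ c).le_radius_of_summable_norm (r := 1)
      (by simpa [FormalMultilinearSeries.ofScalars_norm] using hc)
    simpa using this
  r_pos := one_pos
  hasSum {w} hw := by
    rw [eball_zero_one, mem_ball_zero_iff] at hw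
    simpa [FormalMultilinearSeries.ofScalars_apply_eq', mul_comm] using hasSum_diskSum hc hw

theorem differentiableOn_diskSum (hc : Summable fun m => ‖c m‖) :
    DifferentiableOn ℂ (diskSum c) (ball 0 1) := by
  simpa [eball_zero_one] using (hasFPowerSeriesOnBall_diskSum hc).differentiableOn

theorem eq_zero_of_eqOn_diskSum_zero (hc : Summable fun m => ‖c m‖)
    (h : Set.EqOn (diskSum c) 0 (ball 0 1)) : c = 0 := by
  have hp := (hasFPowerSeriesOnBall_diskSum hc).hasFPowerSeriesAt.eq_zero_of_eventually
    (Filter.eventuallyEq_of_mem (ball_mem_nhds 0 one_pos) h)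
  ext m
  simpa using congrArg (· m) hp

end DiskSum

theorem eq_zero_of_forall_lp_apply_eq {E : Type*} [NormedAddCommGroup E] {p : ENNReal}
    (hp : 0 < p.toReal) (y : lp (fun _ : ℕ => E) p) {g : ℕ → ℕ} (hg : Tendsto g atTop atTop)
    {c : E} (h : ∀ k, y (g k) = c) : c = 0 := by
  have := ((lp.memℓp y).summable hp).tendsto_atTop_zero.comp hg
  simp only [Function.comp_def, h, tendsto_const_nhds_iff] at this
  simpa [hp.ne'] using this

theorem notMem_topologicalClosure_span {𝕜 E F : Type*} [Semiring 𝕜] [AddCommMonoid E]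
    [TopologicalSpace E] [Module 𝕜 E] [ContinuousAdd E] [ContinuousConstSMul 𝕜 E]
    [AddCommMonoid F] [TopologicalSpace F] [T1Space F] [Module 𝕜 F]
    (φ : E →L[𝕜] F) {S : Set E} (hS : ∀ x ∈ S, φ x = 0) {x : E} (hx : φ x ≠ 0) :
    x ∉ (Submodule.span 𝕜 S).topologicalClosure := fun hmem =>
  hx <| Submodule.topologicalClosure_minimal _
    (Submodule.span_le.mpr fun y hy => LinearMap.mem_ker.mpr (hS y hy)) φ.isClosed_ker hmem

theorem not_tendsto_of_notMem_topologicalClosure {𝕜 E : Type*} [Semiring 𝕜] [AddCommMonoid E]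
    [TopologicalSpace E] [Module 𝕜 E] [ContinuousAdd E] [ContinuousConstSMul 𝕜 E]
    {K : Submodule 𝕜 E} {x : E} (hx : x ∉ K.topologicalClosure) {u : ℕ → E} (hu : ∀ n, u n ∈ K) :
    ¬ Tendsto u atTop (𝓝 x) := fun h => by
  rw [← SetLike.mem_coe, Submodule.topologicalClosure_coe] at hx
  exact hx (mem_closure_of_tendsto h (Eventually.of_forall hu))

def polynomialsOn (s : Set ℂ) : Submodule ℂ (ℂ → ℂ) where
  carrier := {g | ∃ p : Polynomial ℂ, ∀ z ∈ s, g z = p.eval z}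
  add_mem' := by
    rintro g h ⟨p, hp⟩ ⟨q, hq⟩
    exact ⟨p + q, fun z hz => by simp [hp z hz, hq z hz]⟩
  zero_mem' := ⟨0, by simp⟩
  smul_mem' := by
    rintro a g ⟨p, hp⟩
    exact ⟨Polynomial.C a * p, fun z hz => by simp [hp z hz]⟩

local notation "ℓ²" => lp (fun _ : ℕ => ℂ) 2

namespace OddTaylor

def coord (n : ℕ) : ℓ² →L[ℂ] ℂ := lp.evalCLM ℂ (fun _ => ℂ) 2 n

@[simp] theorem coord_apply (n : ℕ) (y : ℓ²) : coord n y = y n := rfl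

def rawCoeff (m : ℕ) : ℓ² →L[ℂ] ℂ :=
  if Even m then coord (m + 2)
  else coord 0 + coord m + ∑ i ∈ Finset.range (m / 2 + 1), coord (2 * i + 2)

theorem rawCoeff_two_mul (j : ℕ) (y : ℓ²) : rawCoeff (2 * j) y = y (2 * j + 2) := by
  simp [rawCoeff]

theorem rawCoeff_two_mul_add_one (j : ℕ) (y : ℓ²) :
    rawCoeff (2 * j + 1) y = y 0 + y (2 * j + 1) + ∑ i ∈ Finset.range (j + 1), y (2 * i + 2) := by
  simp [rawCoeff, Nat.not_even_bit1, show (2 * j + 1) / 2 = j by omega]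

theorem norm_rawCoeff_apply_le (m : ℕ) (y : ℓ²) : ‖rawCoeff m y‖ ≤ (m + 3) * ‖y‖ := by
  have hcoord : ∀ n, ‖y n‖ ≤ ‖y‖ := lp.norm_apply_le_norm two_ne_zero y
  have hy := norm_nonneg y
  obtain ⟨j, rfl | rfl⟩ := Nat.even_or_odd' m
  · rw [rawCoeff_two_mul]
    exact (hcoord _).trans (le_mul_of_one_le_left hy (by linarith [(2 * j).cast_nonneg (α := ℝ)]))
  · rw [rawCoeff_two_mul_add_one]
    calc ‖y 0 + y (2 * j + 1) + ∑ i ∈ Finset.range (j + 1), y (2 * i + 2)‖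
        ≤ ‖y‖ + ‖y‖ + ∑ i ∈ Finset.range (j + 1), ‖y‖ := by
          refine (norm_add₃_le).trans (add_le_add (add_le_add (hcoord _) (hcoord _))
            ((norm_sum_le _ _).trans (Finset.sum_le_sum fun i _ => hcoord _)))
      _ ≤ ((2 * j + 1 : ℕ) + 3) * ‖y‖ := by
          simp only [Finset.sum_const, Finset.card_range, nsmul_eq_mul]
          push_cast
          nlinarith [j.cast_nonneg (α := ℝ)]

def taylorCoeff : ℓ² →ₗ[ℂ] ℕ → ℂ :=
  LinearMap.pi fun m => (2 : ℂ)⁻¹ ^ m • (rawCoeff m : ℓ² →ₗ[ℂ] ℂ)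

theorem taylorCoeff_apply (y : ℓ²) (m : ℕ) : taylorCoeff y m = (2 : ℂ)⁻¹ ^ m * rawCoeff m y :=
  rfl

def coeffBound (m : ℕ) : ℝ := (m + 3) * 2⁻¹ ^ m

theorem summable_coeffBound : Summable coeffBound := by
  have hr : ‖(2⁻¹ : ℝ)‖ < 1 := by norm_num
  refine ((summable_pow_mul_geometric_of_norm_lt_one 1 hr).add
    ((summable_geometric_of_norm_lt_one hr).mul_left 3)).congr fun m => ?_
  simp only [coeffBound, pow_one]
  ring

theorem norm_taylorCoeff_le (y : ℓ²) (m : ℕ) : ‖taylorCoeff y m‖ ≤ ‖y‖ * coeffBound m := by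
  have hweight : ‖(2 : ℂ)⁻¹ ^ m‖ = 2⁻¹ ^ m := by simp
  rw [taylorCoeff_apply, norm_mul, hweight, coeffBound]
  calc (2⁻¹ : ℝ) ^ m * ‖rawCoeff m y‖ ≤ 2⁻¹ ^ m * ((m + 3) * ‖y‖) := by
        gcongr
        exact norm_rawCoeff_apply_le m y
    _ = ‖y‖ * ((m + 3) * 2⁻¹ ^ m) := by ring

theorem summable_norm_taylorCoeff (y : ℓ²) : Summable fun m => ‖taylorCoeff y m‖ :=
  (summable_coeffBound.mul_left ‖y‖).of_nonneg_of_le (fun _ => norm_nonneg _)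
    (norm_taylorCoeff_le y)

def embedding : ℓ² →ₗ[ℂ] ℂ → ℂ where
  toFun y := diskSum (taylorCoeff y)
  map_add' x y := by
    rw [map_add, diskSum_add (summable_norm_taylorCoeff x) (summable_norm_taylorCoeff y)]
  map_smul' a y := by rw [map_smul, diskSum_smul, RingHom.id_apply]

theorem embedding_apply (y : ℓ²) : embedding y = diskSum (taylorCoeff y) := rfl

theorem norm_embedding_apply_le (y : ℓ²) (z : ℂ) :
    ‖embedding y z‖ ≤ (∑' m, coeffBound m) * ‖y‖ := by
  calc ‖embedding y z‖ ≤ ∑' m, ‖taylorCoeff y m‖ :=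
        norm_diskSum_le (summable_norm_taylorCoeff y) z
    _ ≤ ∑' m, ‖y‖ * coeffBound m :=
        (summable_norm_taylorCoeff y).tsum_le_tsum (norm_taylorCoeff_le y)
          (summable_coeffBound.mul_left _)
    _ = (∑' m, coeffBound m) * ‖y‖ := by rw [tsum_mul_left, mul_comm]

theorem eq_zero_of_apply_zero_odd_even {y : ℓ²} (h0 : y 0 = 0) (hodd : ∀ k, y (2 * k + 1) = 0)
    (heven : ∀ k, y (2 * k + 2) = 0) : y = 0 := by
  ext n
  obtain ⟨k, rfl | rfl⟩ := Nat.even_or_odd' n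
  · rcases k with _ | k
    · exact h0
    · simpa [mul_add] using heven k
  · exact hodd k

theorem eq_zero_of_forall_rawCoeff_eq_zero {y : ℓ²} (h : ∀ m, rawCoeff m y = 0) : y = 0 := by
  have heven (k : ℕ) : y (2 * k + 2) = 0 := by simpa [rawCoeff_two_mul] using h (2 * k)
  have hodd (k : ℕ) : y (2 * k + 1) = -y 0 := by
    have := h (2 * k + 1)
    simp only [rawCoeff_two_mul_add_one, heven, Finset.sum_const_zero, add_zero] at this
    linear_combination this
  have h0 : y 0 = 0 := neg_eq_zero.mp <| eq_zero_of_forall_lp_apply_eq (by norm_num) y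
    (tendsto_atTop_mono (fun k => show k ≤ 2 * k + 1 by omega) tendsto_id) hodd
  exact eq_zero_of_apply_zero_odd_even h0 (fun k => by rw [hodd, h0, neg_zero]) heven

theorem eq_of_eqOn_embedding {y₁ y₂ : ℓ²}
    (h : ∀ z ∈ ball (0 : ℂ) 1, embedding y₁ z = embedding y₂ z) : y₁ = y₂ := by
  rw [← sub_eq_zero]
  refine eq_zero_of_forall_rawCoeff_eq_zero fun m => ?_
  have hc := eq_zero_of_eqOn_diskSum_zero (summable_norm_taylorCoeff (y₁ - y₂))
    fun z hz => show embedding (y₁ - y₂) z = 0 by rw [map_sub, Pi.sub_apply, h z hz, sub_self]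
  simpa [taylorCoeff_apply] using congrFun hc m

def unitVec (n : ℕ) : ℓ² := lp.single 2 n 1

theorem unitVec_apply (n k : ℕ) : unitVec n k = if k = n then 1 else 0 := by
  simp [unitVec, Pi.single_apply]

/-- `-e₀ + ∑_{l<k} e₂ₗ₊₁` cancels the odd tail that `e₂ₖ₊₂` contributes through the partial
sums in `rawCoeff`, leaving the single monomial `z²ᵏ`. -/
def monomialGen (m : ℕ) : ℓ² :=
  if Even m then unitVec (m + 2) - unitVec 0 + ∑ l ∈ Finset.range (m / 2), unitVec (2 * l + 1)
  else unitVec m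

theorem monomialGen_two_mul (k : ℕ) : monomialGen (2 * k) =
    unitVec (2 * k + 2) - unitVec 0 + ∑ l ∈ Finset.range k, unitVec (2 * l + 1) := by
  simp [monomialGen]

theorem monomialGen_two_mul_add_one (k : ℕ) : monomialGen (2 * k + 1) = unitVec (2 * k + 1) := by
  simp [monomialGen, Nat.not_even_bit1]

theorem coe_sum_apply (s : Finset ℕ) (v : ℕ → ℓ²) (n : ℕ) : (∑ i ∈ s, v i) n = ∑ i ∈ s, v i n := by
  rw [lp.coeFn_sum, Finset.sum_apply]

theorem monomialGen_two_mul_apply (k n : ℕ) : monomialGen (2 * k) n =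
    unitVec (2 * k + 2) n - unitVec 0 n + ∑ l ∈ Finset.range k, unitVec (2 * l + 1) n := by
  simp only [monomialGen_two_mul, lp.coeFn_add, lp.coeFn_sub, Pi.add_apply, Pi.sub_apply,
    coe_sum_apply]

theorem rawCoeff_monomialGen (m n : ℕ) :
    rawCoeff n (monomialGen m) = (Pi.single m 1 : ℕ → ℂ) n := by
  obtain ⟨k, rfl | rfl⟩ := Nat.even_or_odd' m <;> obtain ⟨j, rfl | rfl⟩ := Nat.even_or_odd' n <;>
    simp [rawCoeff_two_mul, rawCoeff_two_mul_add_one, monomialGen_two_mul_apply,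
      monomialGen_two_mul_add_one, unitVec_apply, Pi.single_apply, Nat.two_mul_ne_two_mul_add_one,
      Ne.symm Nat.two_mul_ne_two_mul_add_one]
  split_ifs <;> first | (exfalso; omega) | ring

theorem taylorCoeff_monomialGen (m : ℕ) : taylorCoeff (monomialGen m) = Pi.single m (2⁻¹ ^ m) := by
  ext n
  rw [taylorCoeff_apply, rawCoeff_monomialGen]
  by_cases h : n = m
  · subst h; simp
  · simp [h]

theorem embedding_monomialGen (m : ℕ) {z : ℂ} (hz : z ∈ ball (0 : ℂ) 1) :
    embedding (monomialGen m) z = 2⁻¹ ^ m * z ^ m := by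
  rw [embedding_apply, taylorCoeff_monomialGen, diskSum_single m _ (mem_ball_zero_iff.mp hz)]

def monomialVec (m : ℕ) : ℓ² := (2 : ℂ) ^ m • monomialGen m

theorem embedding_monomialVec (m : ℕ) {z : ℂ} (hz : z ∈ ball (0 : ℂ) 1) :
    embedding (monomialVec m) z = z ^ m := by
  rw [monomialVec, map_smul, Pi.smul_apply, embedding_monomialGen m hz, smul_eq_mul, ← mul_assoc,
    ← mul_pow, mul_inv_cancel₀ two_ne_zero, one_pow, one_mul]

theorem exists_embedding_eq_eval (p : Polynomial ℂ) :
    ∃ y : ℓ², ∀ z ∈ ball (0 : ℂ) 1, embedding y z = p.eval z := by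
  induction p using Polynomial.induction_on' with
  | add p q hp hq =>
    obtain ⟨y, hy⟩ := hp
    obtain ⟨w, hw⟩ := hq
    exact ⟨y + w, fun z hz => by simp [hy z hz, hw z hz]⟩
  | monomial m a => exact ⟨a • monomialVec m, fun z hz => by simp [embedding_monomialVec m hz]⟩

theorem inner_unitVec_left (n : ℕ) (w : ℓ²) : inner ℂ (unitVec n) w = w n := by
  simp [unitVec, lp.inner_single_left]

theorem orthogonal_span_monomialGen : (Submodule.span ℂ (Set.range monomialGen))ᗮ = ⊥ := by
  refine (Submodule.eq_bot_iff _).mpr fun w hw => ?_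
  have hinner (m : ℕ) : inner ℂ (monomialGen m) w = 0 :=
    Submodule.inner_right_of_mem_orthogonal (Submodule.subset_span (Set.mem_range_self m)) hw
  have hodd (k : ℕ) : w (2 * k + 1) = 0 := by
    simpa [monomialGen_two_mul_add_one, inner_unitVec_left] using hinner (2 * k + 1)
  have heven (k : ℕ) : w (2 * k + 2) = w 0 := by
    have := hinner (2 * k)
    simp only [monomialGen_two_mul, inner_add_left, inner_sub_left, sum_inner, inner_unitVec_left,
      hodd, Finset.sum_const_zero, add_zero] at this
    exact sub_eq_zero.mp this
  have h0 : w 0 = 0 := eq_zero_of_forall_lp_apply_eq (by norm_num) w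
    (tendsto_atTop_mono (fun k => show k ≤ 2 * k + 2 by omega) tendsto_id) heven
  exact eq_zero_of_apply_zero_odd_even h0 hodd fun k => (heven k).trans h0

theorem dense_comap_polynomialsOn :
    Dense ((polynomialsOn (ball (0 : ℂ) 1)).comap embedding : Set ℓ²) := by
  have hspan :
      Submodule.span ℂ (Set.range monomialGen) ≤ (polynomialsOn (ball 0 1)).comap embedding :=
    Submodule.span_le.mpr <| Set.range_subset_iff.mpr fun m =>
      ⟨Polynomial.C (2⁻¹ ^ m) * Polynomial.X ^ m, fun z hz => by simp [embedding_monomialGen m hz]⟩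
  refine Dense.mono hspan ?_
  rw [Submodule.dense_iff_topologicalClosure_eq_top, Submodule.topologicalClosure_eq_top_iff]
  exact orthogonal_span_monomialGen

def partialSum (k : ℕ) : ℓ² :=
  ∑ n ∈ Finset.range (k + 1), taylorCoeff (unitVec 0) n • monomialVec n

theorem embedding_partialSum (k : ℕ) {z : ℂ} (hz : z ∈ ball (0 : ℂ) 1) :
    embedding (partialSum k) z = ∑ n ∈ Finset.range (k + 1), taylorCoeff (unitVec 0) n * z ^ n := by
  simp [partialSum, embedding_monomialVec _ hz]

theorem partialSum_apply_zero (k : ℕ) : partialSum k 0 = 0 := by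
  rw [partialSum, coe_sum_apply]
  refine Finset.sum_eq_zero fun n _ => ?_
  obtain ⟨j, rfl | rfl⟩ := Nat.even_or_odd' n
  · simp [taylorCoeff_apply, rawCoeff_two_mul, unitVec_apply]
  · simp [monomialVec, monomialGen_two_mul_add_one, unitVec_apply]

end OddTaylor

open OddTaylor in
/-- There exist a Hilbert holomorphic function space `H` on the unit disk in which the
polynomials are dense, and an `f ∈ H` lying outside the closed linear span of its Taylor
partial sums; consequently no triangular summability method applied to the partial sums
converges to `f`. -/
theorem stmt15 :
    ∃ (H : Type) (_ : NormedAddCommGroup H) (_ : InnerProductSpace ℂ H) (_ : CompleteSpace H)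
      (ι : H →ₗ[ℂ] (ℂ → ℂ)),
      (∀ h : H, DifferentiableOn ℂ (ι h) (ball (0 : ℂ) 1)) ∧
      (∀ h₁ h₂ : H, (∀ z ∈ ball (0 : ℂ) 1, ι h₁ z = ι h₂ z) → h₁ = h₂) ∧
      (∀ K : Set ℂ, IsCompact K → K ⊆ ball (0 : ℂ) 1 →
        ∃ C : ℝ, ∀ h : H, ∀ z ∈ K, ‖ι h z‖ ≤ C * ‖h‖) ∧
      (∀ p : Polynomial ℂ, ∃ h : H, ∀ z ∈ ball (0 : ℂ) 1, ι h z = p.eval z) ∧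
      Dense {h : H | ∃ p : Polynomial ℂ, ∀ z ∈ ball (0 : ℂ) 1, ι h z = p.eval z} ∧
      ∃ (f : H) (a : ℕ → ℂ) (s : ℕ → H),
        -- `a` is the Taylor coefficient sequence of `f`
        (∀ z ∈ ball (0 : ℂ) 1, HasSum (fun n => a n * z ^ n) (ι f z)) ∧
        -- `s k` is the k-th Taylor partial sum of `f`, as an element of `H`
        (∀ k, ∀ z ∈ ball (0 : ℂ) 1, ι (s k) z = ∑ n ∈ Finset.range (k + 1), a n * z ^ n) ∧
        -- `f` is outside the closed linear span of its partial sums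
        f ∉ (Submodule.span ℂ (Set.range s)).topologicalClosure ∧
        -- hence no triangular summability method converges to `f`
        ∀ c : ℕ → ℕ → ℂ,
          ¬ Filter.Tendsto (fun n => ∑ k ∈ Finset.range (n + 1), c n k • s k)
            Filter.atTop (nhds f) := by
  have hf : unitVec 0 ∉ (Submodule.span ℂ (Set.range partialSum)).topologicalClosure :=
    notMem_topologicalClosure_span (coord 0) (by rintro _ ⟨k, rfl⟩; exact partialSum_apply_zero k)
      (by simp [unitVec_apply])
  refine ⟨ℓ², inferInstance, inferInstance, inferInstance, embedding,
    fun y => differentiableOn_diskSum (summable_norm_taylorCoeff y),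
    fun _ _ => eq_of_eqOn_embedding,
    fun _ _ _ => ⟨_, fun y z _ => norm_embedding_apply_le y z⟩,
    exists_embedding_eq_eval, dense_comap_polynomialsOn,
    unitVec 0, taylorCoeff (unitVec 0), partialSum,
    fun z hz => hasSum_diskSum (summable_norm_taylorCoeff _) (mem_ball_zero_iff.mp hz),
    fun k _ => embedding_partialSum k, hf, fun c => ?_⟩
  exact not_tendsto_of_notMem_topologicalClosure hf fun n =>
    Submodule.sum_mem _ fun k _ => Submodule.smul_mem _ _ (Submodule.subset_span ⟨k, rfl⟩)
end
end

section
/- Let I ⊆ ℤ⁺ be such that both I and ℤ⁺ \ I are infinite. Then there exists a Hilbert holomorphic function space H on the unit disk in which the polynomials are dense, but the set of polynomials p with supp(\hat p) ⊆ I is not dense in {f ∈ H : supp(\hat f) ⊆ I}. -/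
/-!
Take `H = ℓ²(ℕ ⊕ ℕ)` and write `u k = x (inl k)`, `v k = x (inr k)`. The Taylor coefficient of
index `nth I k` is `v k + (k + 1) u k`, and that of index `nth Iᶜ k` is
`(k + 1) u k - (k + 2) u (k + 1)`. These grow at most linearly in the index, so every `x`
defines a holomorphic function on the disk, and finitely supported `x` (a dense set) give
polynomials; conversely every polynomial is reached by solving the two recurrences backwards
from its degree.

If the coefficients off `I` vanish, then `(k + 1) u k = u 0` for all `k`. If moreover the
coefficients on `I` vanish eventually, then `v k = -u 0` eventually, and `v ∈ ℓ²` forces `u 0 = 0`.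
This gives injectivity, and shows that every element mapped to a polynomial supported in `I`
has `u 0 = 0`. The element `u k = 1 / (k + 1)`, `v = 0` has Taylor support in `I` and `u 0 = 1`,
so it stays at distance at least `1` from all of them.
-/

open Metric Filter Set Topology FormalMultilinearSeries
open scoped ENNReal lp

noncomputable section

lemma hasSum_succ_mul_geometric {r : ℝ} (h0 : 0 ≤ r) (h1 : r < 1) :
    HasSum (fun n : ℕ => ((n : ℝ) + 1) * r ^ n) (1 / (1 - r) ^ 2) := by
  simpa using hasSum_choose_mul_geometric_of_norm_lt_one 1 (r := r)
    (by rwa [Real.norm_of_nonneg h0])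

section LinearGrowth

variable {c c' : ℕ → ℂ} {C : ℝ}

lemma one_le_radius_ofScalars_of_norm_le (hc : ∀ n, ‖c n‖ ≤ C * (n + 1)) :
    1 ≤ (ofScalars ℂ c).radius := by
  refine ENNReal.le_of_forall_nnreal_lt fun r hr => le_radius_of_summable_norm _ ?_
  have hr1 : (r : ℝ) < 1 := by exact_mod_cast hr
  have hg := ((hasSum_succ_mul_geometric r.2 hr1).mul_left C).summable
  refine .of_nonneg_of_le (fun n => by positivity) (fun n => ?_) hg
  rw [ofScalars_norm, ← mul_assoc]
  exact mul_le_mul_of_nonneg_right (hc n) (by positivity)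

lemma mem_eball_radius_of_one_le {p : FormalMultilinearSeries ℂ ℂ ℂ} (hp : 1 ≤ p.radius) {z : ℂ}
    (hz : z ∈ ball (0 : ℂ) 1) : z ∈ eball (0 : ℂ) p.radius :=
  eball_subset_eball hp (by rwa [← ENNReal.coe_one, eball_coe, NNReal.coe_one])

lemma ofScalars_sum_apply (c : ℕ → ℂ) (z : ℂ) :
    (ofScalars ℂ c).sum z = ∑' n, c n * z ^ n :=
  ofScalars_sum_eq c z

lemma hasSum_ofScalars_sum (hc : 1 ≤ (ofScalars ℂ c).radius) {z : ℂ} (hz : z ∈ ball (0 : ℂ) 1) :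
    HasSum (fun n => c n * z ^ n) ((ofScalars ℂ c).sum z) := by
  simpa [ofScalars_apply_eq, mul_comm] using
    (ofScalars ℂ c).hasSum (mem_eball_radius_of_one_le hc hz)

lemma differentiableOn_ofScalars_sum (hc : 1 ≤ (ofScalars ℂ c).radius) :
    DifferentiableOn ℂ (ofScalars ℂ c).sum (ball 0 1) :=
  ((ofScalars ℂ c).hasFPowerSeriesOnBall (zero_lt_one.trans_le hc)).differentiableOn.mono
    fun _ => mem_eball_radius_of_one_le hc

lemma norm_ofScalars_sum_le (hc : ∀ n, ‖c n‖ ≤ C * (n + 1)) {r : ℝ} (hr : r < 1) {z : ℂ}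
    (hz : ‖z‖ ≤ r) : ‖(ofScalars ℂ c).sum z‖ ≤ C / (1 - r) ^ 2 := by
  have h0 : 0 ≤ r := (norm_nonneg z).trans hz
  have hC : 0 ≤ C := by simpa using (norm_nonneg (c 0)).trans (hc 0)
  have hsum := hasSum_ofScalars_sum (one_le_radius_ofScalars_of_norm_le hc)
    (mem_ball_zero_iff.2 (hz.trans_lt hr))
  refine (hsum.norm_le_of_bounded ((hasSum_succ_mul_geometric h0 hr).mul_left C) fun n => ?_).trans
    (by rw [mul_one_div])
  rw [norm_mul, norm_pow, ← mul_assoc]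
  exact mul_le_mul (hc n) (pow_le_pow_left₀ (norm_nonneg z) hz n) (by positivity) (by positivity)

lemma ofScalars_sum_add (hc : 1 ≤ (ofScalars ℂ c).radius)
    (hc' : 1 ≤ (ofScalars ℂ c').radius) {z : ℂ} (hz : z ∈ ball (0 : ℂ) 1) :
    (ofScalars ℂ (c + c')).sum z = (ofScalars ℂ c).sum z + (ofScalars ℂ c').sum z := by
  rw [ofScalars_sum_apply (c + c')]
  simp only [Pi.add_apply, add_mul]
  exact ((hasSum_ofScalars_sum hc hz).add (hasSum_ofScalars_sum hc' hz)).tsum_eq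

lemma ofScalars_sum_smul (a : ℂ) (z : ℂ) :
    (ofScalars ℂ (a • c)).sum z = a * (ofScalars ℂ c).sum z := by
  simp only [ofScalars_sum_apply, Pi.smul_apply, smul_eq_mul, mul_assoc, tsum_mul_left]

lemma eq_of_eqOn_ofScalars_sum (hc : 1 ≤ (ofScalars ℂ c).radius)
    (hc' : 1 ≤ (ofScalars ℂ c').radius)
    (h : EqOn (ofScalars ℂ c).sum (ofScalars ℂ c').sum (ball 0 1)) : c = c' := by
  have h₁ := ((ofScalars ℂ c).hasFPowerSeriesOnBall (zero_lt_one.trans_le hc)).hasFPowerSeriesAt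
  have h₂ := ((ofScalars ℂ c').hasFPowerSeriesOnBall (zero_lt_one.trans_le hc')).hasFPowerSeriesAt
  exact ofScalars_series_injective ℂ ℂ
    ((h₁.congr (eventuallyEq_of_mem (ball_mem_nhds 0 one_pos) h)).eq_formalMultilinearSeries h₂)

end LinearGrowth

section Polynomial

open Polynomial

lemma ofScalars_coeff_sum_eq_eval (p : ℂ[X]) (z : ℂ) : (ofScalars ℂ p.coeff).sum z = p.eval z := by
  rw [ofScalars_sum_apply, eval_eq_sum_range]
  exact tsum_eq_sum fun n hn => by
    rw [coeff_eq_zero_of_natDegree_lt (by simpa using hn), zero_mul]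

lemma Polynomial.eventually_coeff_eq_zero {R : Type*} [Semiring R] (p : R[X]) :
    ∀ᶠ n in atTop, p.coeff n = 0 :=
  (eventually_gt_atTop p.natDegree).mono fun _ => coeff_eq_zero_of_natDegree_lt

lemma radius_ofScalars_coeff (p : ℂ[X]) : (ofScalars ℂ p.coeff).radius = ⊤ :=
  radius_eq_top_of_eventually_eq_zero _ <|
    p.eventually_coeff_eq_zero.mono fun _ => ofScalars_eq_zero_of_scalar_zero _

lemma Polynomial.exists_coeff_eq_of_eventually_eq_zero {R : Type*} [Semiring R] {c : ℕ → R}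
    (hc : ∀ᶠ n in atTop, c n = 0) :
    ∃ p : R[X], p.coeff = c := by
  rw [← Nat.cofinite_eq_atTop, eventually_cofinite] at hc
  exact ⟨.ofFinsupp (.ofCoeff (.ofSupportFinite c hc)), rfl⟩

end Polynomial

section Interleave

variable {α : Type*}

open Classical

def interleave (s : Set ℕ) (a b : ℕ → α) (n : ℕ) : α :=
  if n ∈ s then a (Nat.count (· ∈ s) n) else b (Nat.count (· ∉ s) n)

lemma interleave_nth_mem {s : Set ℕ} (hs : s.Infinite) (a b : ℕ → α) (k : ℕ) :
    interleave s a b (Nat.nth (· ∈ s) k) = a k := by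
  rw [interleave, if_pos (Nat.nth_mem_of_infinite (p := (· ∈ s)) hs k),
    Nat.count_nth_of_infinite (p := (· ∈ s)) hs]

lemma interleave_nth_notMem {s : Set ℕ} (hs : sᶜ.Infinite) (a b : ℕ → α) (k : ℕ) :
    interleave s a b (Nat.nth (· ∉ s) k) = b k := by
  rw [interleave, if_neg (Nat.nth_mem_of_infinite (p := (· ∉ s)) hs k),
    Nat.count_nth_of_infinite hs]

lemma interleave_comp_nth (s : Set ℕ) (c : ℕ → α) :
    interleave s (c ∘ Nat.nth (· ∈ s)) (c ∘ Nat.nth (· ∉ s)) = c := by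
  ext n
  unfold interleave
  split_ifs with h <;> exact congrArg c (Nat.nth_count h)

lemma norm_interleave_le [Norm α] {s : Set ℕ} {a b : ℕ → α} {g : ℕ → ℝ} (hg : Monotone g)
    (ha : ∀ k, ‖a k‖ ≤ g k) (hb : ∀ k, ‖b k‖ ≤ g k) (n : ℕ) : ‖interleave s a b n‖ ≤ g n := by
  unfold interleave
  split_ifs
  · exact (ha _).trans (hg (Nat.count_le _))
  · exact (hb _).trans (hg (Nat.count_le _))

lemma Nat.tendsto_count_atTop {p : ℕ → Prop} [DecidablePred p] (hp : (Set.ofPred p).Infinite) :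
    Tendsto (Nat.count p) atTop atTop :=
  tendsto_atTop_atTop.2 fun k => ⟨Nat.nth p k, fun _ hn =>
    (Nat.count_nth_of_infinite hp k).ge.trans (Nat.count_monotone p hn)⟩

lemma eventually_interleave_eq_zero [Zero α] {s : Set ℕ} (hs : s.Infinite) (hsc : sᶜ.Infinite)
    {a b : ℕ → α} (ha : ∀ᶠ k in atTop, a k = 0) (hb : ∀ᶠ k in atTop, b k = 0) :
    ∀ᶠ n in atTop, interleave s a b n = 0 := by
  filter_upwards [(Nat.tendsto_count_atTop (p := (· ∈ s)) hs).eventually ha,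
    (Nat.tendsto_count_atTop hsc).eventually hb] with n han hbn
  unfold interleave
  split_ifs <;> assumption

end Interleave

namespace lp

variable {ι : Type*} {E : ι → Type*} [∀ i, NormedAddCommGroup (E i)] {p : ℝ≥0∞} [Fact (1 ≤ p)]

lemma dense_finite_support (hp : p ≠ ⊤) : Dense {x : lp E p | {i | x i ≠ 0}.Finite} := by
  classical
  refine fun x => mem_closure_of_tendsto (lp.hasSum_single hp x) (Eventually.of_forall fun t => ?_)
  refine t.finite_toSet.subset fun i hi => ?_
  by_contra hit
  refine hi ?_
  rw [lp.coeFn_sum, Finset.sum_apply]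
  exact Finset.sum_eq_zero fun j hj => lp.single_apply_ne p j _ (ne_of_mem_of_not_mem hj hit).symm

lemma tendsto_norm_cofinite_zero (hp : p ≠ ⊤) (x : lp E p) :
    Tendsto (fun i => ‖x i‖) cofinite (𝓝 0) := by
  have hp0 : 0 < p.toReal := ENNReal.toReal_pos (zero_lt_one.trans_le Fact.out).ne' hp
  have h := ((lp.memℓp x).summable hp0).tendsto_cofinite_zero
  have hc :=
    (Real.continuousAt_rpow_const 0 p.toReal⁻¹ (Or.inr (inv_nonneg.2 hp0.le))).tendsto.comp h
  rw [Real.zero_rpow (inv_pos.2 hp0).ne'] at hc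
  refine hc.congr fun i => ?_
  exact Real.rpow_rpow_inv (norm_nonneg _) hp0.ne'

end lp

namespace TaylorSupport

def coeffIn (x : ℕ ⊕ ℕ → ℂ) (k : ℕ) : ℂ := x (.inr k) + (k + 1) * x (.inl k)

def coeffOut (x : ℕ ⊕ ℕ → ℂ) (k : ℕ) : ℂ := (k + 1) * x (.inl k) - (k + 2) * x (.inl (k + 1))

def taylorCoeff (s : Set ℕ) : (ℕ ⊕ ℕ → ℂ) →ₗ[ℂ] (ℕ → ℂ) where
  toFun x := interleave s (coeffIn x) (coeffOut x)
  map_add' x y := by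
    ext n
    simp only [interleave, coeffIn, coeffOut, Pi.add_apply]
    split_ifs <;> ring
  map_smul' a x := by
    ext n
    simp only [interleave, coeffIn, coeffOut, Pi.smul_apply, smul_eq_mul, RingHom.id_apply]
    split_ifs <;> ring

lemma taylorCoeff_apply (s : Set ℕ) (x : ℕ ⊕ ℕ → ℂ) :
    taylorCoeff s x = interleave s (coeffIn x) (coeffOut x) := rfl

lemma norm_taylorCoeff_le (s : Set ℕ) {x : ℕ ⊕ ℕ → ℂ} {M : ℝ} (hx : ∀ i, ‖x i‖ ≤ M) (n : ℕ) :
    ‖taylorCoeff s x n‖ ≤ 3 * M * (n + 1) := by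
  have hM : 0 ≤ M := (norm_nonneg _).trans (hx (.inl 0))
  have h1 (k : ℕ) : ‖(k : ℂ) + 1‖ = k + 1 := by exact_mod_cast Complex.norm_natCast (k + 1)
  have h2 (k : ℕ) : ‖(k : ℂ) + 2‖ = k + 2 := by exact_mod_cast Complex.norm_natCast (k + 2)
  rw [taylorCoeff_apply]
  refine norm_interleave_le (g := fun k : ℕ => 3 * M * (k + 1))
    (fun k l hkl => by dsimp only; gcongr) (fun k => ?_) (fun k => ?_) n
  · unfold coeffIn
    calc _ ≤ ‖x (.inr k)‖ + (k + 1) * ‖x (.inl k)‖ := by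
          simpa [h1] using norm_add_le (x (.inr k)) ((k + 1) * x (.inl k))
      _ ≤ M + (k + 1) * M := by gcongr <;> exact hx _
      _ ≤ 3 * M * (k + 1) := by nlinarith
  · unfold coeffOut
    calc _ ≤ (k + 1) * ‖x (.inl k)‖ + (k + 2) * ‖x (.inl (k + 1))‖ := by
          simpa [h1, h2] using
            norm_sub_le ((k + 1) * x (.inl k)) ((k + 2) * x (.inl (k + 1)))
      _ ≤ (k + 1) * M + (k + 2) * M := by gcongr <;> exact hx _
      _ ≤ 3 * M * (k + 1) := by nlinarith

lemma taylorCoeff_eq_iff {s : Set ℕ} (hs : s.Infinite) (hsc : sᶜ.Infinite) (x : ℕ ⊕ ℕ → ℂ)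
    (c : ℕ → ℂ) : taylorCoeff s x = c ↔
      coeffIn x = c ∘ Nat.nth (· ∈ s) ∧ coeffOut x = c ∘ Nat.nth (· ∉ s) := by
  refine ⟨fun h => ⟨?_, ?_⟩, fun ⟨hin, hout⟩ => ?_⟩
  · ext k
    rw [Function.comp_apply, ← h, taylorCoeff_apply, interleave_nth_mem hs]
  · ext k
    rw [Function.comp_apply, ← h, taylorCoeff_apply, interleave_nth_notMem hsc]
  · rw [taylorCoeff_apply, hin, hout, interleave_comp_nth]

lemma succ_mul_inl_eq_of_coeffOut_eq_zero {x : ℕ ⊕ ℕ → ℂ} (h : coeffOut x = 0) (k : ℕ) :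
    (k + 1) * x (.inl k) = x (.inl 0) := by
  induction k with
  | zero => simp
  | succ k ih =>
    have hk := congrFun h k
    simp only [coeffOut, Pi.zero_apply] at hk
    push_cast
    linear_combination ih - hk

lemma inl_zero_eq_zero (y : ℓ²(ℕ ⊕ ℕ, ℂ)) (hout : coeffOut y = 0)
    (hin : ∀ᶠ k in atTop, coeffIn y k = 0) : y (.inl 0) = 0 := by
  have hlim : Tendsto (fun k => ‖y (.inr k)‖) atTop (𝓝 0) := by
    rw [← Nat.cofinite_eq_atTop]
    exact (lp.tendsto_norm_cofinite_zero ENNReal.ofNat_ne_top y).comp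
      Sum.inr_injective.tendsto_cofinite
  have hconst : ∀ᶠ k in atTop, ‖y (.inl 0)‖ = ‖y (.inr k)‖ := hin.mono fun k hk => by
    rw [← succ_mul_inl_eq_of_coeffOut_eq_zero hout k, ← norm_neg]
    congr 1
    simp only [coeffIn] at hk
    linear_combination -hk
  exact norm_eq_zero.1 (tendsto_nhds_unique (tendsto_const_nhds.congr' hconst) hlim)

lemma eq_zero_of_taylorCoeff_eq_zero {s : Set ℕ} (hs : s.Infinite) (hsc : sᶜ.Infinite)
    (y : ℓ²(ℕ ⊕ ℕ, ℂ)) (h : taylorCoeff s y = 0) : y = 0 := by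
  obtain ⟨hin, hout⟩ := (taylorCoeff_eq_iff hs hsc y 0).1 h
  have hinl (k : ℕ) : y (.inl k) = 0 := by
    have hk := succ_mul_inl_eq_of_coeffOut_eq_zero hout k
    rw [inl_zero_eq_zero y hout (Eventually.of_forall fun k => congrFun hin k)] at hk
    exact (mul_eq_zero.1 hk).resolve_left (Nat.cast_add_one_ne_zero k)
  have hinr (k : ℕ) : y (.inr k) = 0 := by
    simpa [coeffIn, hinl k] using congrFun hin k
  ext (k | k)
  · exact hinl k
  · exact hinr k

lemma exists_coeffIn_coeffOut_eq {a b : ℕ → ℂ} (ha : ∀ᶠ k in atTop, a k = 0)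
    (hb : ∀ᶠ k in atTop, b k = 0) : ∃ x : ℓ²(ℕ ⊕ ℕ, ℂ), coeffIn x = a ∧ coeffOut x = b := by
  obtain ⟨N, hN⟩ := eventually_atTop.1 (ha.and hb)
  set S : ℕ → ℂ := fun k => ∑ j ∈ Finset.Ico k N, b j with hS
  have hS_of_le {k : ℕ} (hk : N ≤ k) : S k = 0 := by simp [hS, hk]
  have hS_succ (k : ℕ) : S k = b k + S (k + 1) := by
    rcases lt_or_ge k N with hk | hk
    · exact Finset.sum_eq_sum_Ico_succ_bot hk b
    · rw [hS_of_le hk, hS_of_le (hk.trans k.le_succ), (hN k hk).2, add_zero]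
  set x : ℕ ⊕ ℕ → ℂ := Sum.elim (fun k => S k / (k + 1)) (fun k => a k - S k) with hx
  have hfin : {i | x i ≠ 0}.Finite := by
    refine (((finite_Iio N).image Sum.inl).union ((finite_Iio N).image Sum.inr)).subset ?_
    rintro (k | k) hk <;> by_contra hkN <;>
      have hNk : N ≤ k := not_lt.1 fun h => hkN (by simp [h]) <;>
      exact hk (by simp [hx, hS_of_le hNk, (hN k hNk).1])
  refine ⟨⟨x, (memℓp_zero hfin).of_exponent_ge zero_le⟩, funext fun k => ?_,
    funext fun k => ?_⟩
  · have hk := Nat.cast_add_one_ne_zero (R := ℂ) k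
    simp only [coeffIn, hx, Sum.elim_inl, Sum.elim_inr]
    field_simp
    ring
  · have hk := Nat.cast_add_one_ne_zero (R := ℂ) k
    have hk' : (k : ℂ) + 2 ≠ 0 := by exact_mod_cast (k + 1).succ_ne_zero
    simp only [coeffOut, hx, Sum.elim_inl]
    rw [mul_div_cancel₀ _ hk, Nat.cast_add_one, add_assoc, one_add_one_eq_two,
      mul_div_cancel₀ _ hk']
    linear_combination hS_succ k

lemma exists_taylorCoeff_eq_coeff {s : Set ℕ} (hs : s.Infinite) (hsc : sᶜ.Infinite)
    (p : Polynomial ℂ) : ∃ x : ℓ²(ℕ ⊕ ℕ, ℂ), taylorCoeff s x = p.coeff := by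
  obtain ⟨x, hin, hout⟩ := exists_coeffIn_coeffOut_eq
    ((Nat.nth_strictMono hs).tendsto_atTop.eventually p.eventually_coeff_eq_zero)
    ((Nat.nth_strictMono hsc).tendsto_atTop.eventually p.eventually_coeff_eq_zero)
  exact ⟨x, (taylorCoeff_eq_iff hs hsc x _).2 ⟨hin, hout⟩⟩

lemma eventually_taylorCoeff_eq_zero {s : Set ℕ} (hs : s.Infinite) (hsc : sᶜ.Infinite)
    {x : ℕ ⊕ ℕ → ℂ} (hx : {i | x i ≠ 0}.Finite) : ∀ᶠ n in atTop, taylorCoeff s x n = 0 := by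
  have hinl : ∀ᶠ k in atTop, x (.inl k) = 0 := by
    rw [← Nat.cofinite_eq_atTop]
    exact Sum.inl_injective.tendsto_cofinite.eventually (eventually_cofinite.2 hx)
  have hinr : ∀ᶠ k in atTop, x (.inr k) = 0 := by
    rw [← Nat.cofinite_eq_atTop]
    exact Sum.inr_injective.tendsto_cofinite.eventually (eventually_cofinite.2 hx)
  refine eventually_interleave_eq_zero hs hsc ?_ ?_
  · filter_upwards [hinl, hinr] with k hl hr
    simp [coeffIn, hl, hr]
  · filter_upwards [hinl, (tendsto_add_atTop_nat 1).eventually hinl] with k hl hl'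
    simp [coeffOut, hl, hl']

def witness : ℓ²(ℕ ⊕ ℕ, ℂ) :=
  ⟨Sum.elim (fun k => ((k : ℂ) + 1)⁻¹) 0, by
    refine memℓp_gen (.sum _ ?_ (by simp [Function.comp_def]))
    refine ((summable_nat_add_iff 1).2 (Real.summable_one_div_nat_rpow.2 one_lt_two)).congr
      fun k => ?_
    have hk : ‖(k : ℂ) + 1‖ = k + 1 := by exact_mod_cast Complex.norm_natCast (k + 1)
    simp [hk]⟩

lemma coeffOut_witness : coeffOut witness = 0 := by
  ext k
  have hk := Nat.cast_add_one_ne_zero (R := ℂ) k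
  have hk' : (k : ℂ) + 2 ≠ 0 := by exact_mod_cast (k + 1).succ_ne_zero
  simp only [coeffOut, witness, Sum.elim_inl, Pi.zero_apply]
  rw [mul_inv_cancel₀ hk, Nat.cast_add_one, add_assoc, one_add_one_eq_two, mul_inv_cancel₀ hk',
    sub_self]

lemma taylorCoeff_witness_of_notMem (s : Set ℕ) {n : ℕ} (hn : n ∉ s) :
    taylorCoeff s witness n = 0 := by
  rw [taylorCoeff_apply, interleave, if_neg hn, coeffOut_witness, Pi.zero_apply]

lemma one_le_dist_witness (y : ℓ²(ℕ ⊕ ℕ, ℂ)) (hout : coeffOut y = 0)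
    (hin : ∀ᶠ k in atTop, coeffIn y k = 0) : 1 ≤ dist witness y :=
  calc 1 = ‖(witness - y) (.inl 0)‖ := by
        rw [lp.coeFn_sub, Pi.sub_apply, inl_zero_eq_zero y hout hin]
        simp [witness]
    _ ≤ ‖witness - y‖ := lp.norm_apply_le_norm two_ne_zero _ _
    _ = dist witness y := (dist_eq_norm _ _).symm

lemma one_le_radius_taylorCoeff (s : Set ℕ) (x : ℓ²(ℕ ⊕ ℕ, ℂ)) :
    1 ≤ (ofScalars ℂ (taylorCoeff s x)).radius :=
  one_le_radius_ofScalars_of_norm_le (norm_taylorCoeff_le s (lp.norm_apply_le_norm two_ne_zero x))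

def embed (s : Set ℕ) : ℓ²(ℕ ⊕ ℕ, ℂ) →ₗ[ℂ] (ℂ → ℂ) where
  toFun x := (ball 0 1).indicator (ofScalars ℂ (taylorCoeff s x)).sum
  map_add' x y := by
    ext z
    by_cases hz : z ∈ ball (0 : ℂ) 1
    · simp only [Pi.add_apply, indicator_of_mem hz, lp.coeFn_add, map_add]
      exact ofScalars_sum_add (one_le_radius_taylorCoeff s x) (one_le_radius_taylorCoeff s y) hz
    · simp [indicator_of_notMem hz]
  map_smul' a x := by
    ext z
    by_cases hz : z ∈ ball (0 : ℂ) 1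
    · simp only [Pi.smul_apply, indicator_of_mem hz, lp.coeFn_smul, map_smul, smul_eq_mul,
        RingHom.id_apply]
      exact ofScalars_sum_smul a z
    · simp [indicator_of_notMem hz]

lemma embed_apply (s : Set ℕ) (x : ℓ²(ℕ ⊕ ℕ, ℂ)) {z : ℂ} (hz : z ∈ ball (0 : ℂ) 1) :
    embed s x z = (ofScalars ℂ (taylorCoeff s x)).sum z :=
  indicator_of_mem hz _

lemma embed_eqOn_eval_iff (s : Set ℕ) (x : ℓ²(ℕ ⊕ ℕ, ℂ)) (p : Polynomial ℂ) :
    (∀ z ∈ ball (0 : ℂ) 1, embed s x z = p.eval z) ↔ taylorCoeff s x = p.coeff := by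
  refine ⟨fun h => eq_of_eqOn_ofScalars_sum (one_le_radius_taylorCoeff s x)
    (radius_ofScalars_coeff p ▸ le_top) fun z hz => ?_, fun h z hz => ?_⟩
  · rw [← embed_apply s x hz, h z hz, ofScalars_coeff_sum_eq_eval]
  · rw [embed_apply s x hz, h, ofScalars_coeff_sum_eq_eval]

lemma embed_injective {s : Set ℕ} (hs : s.Infinite) (hsc : sᶜ.Infinite) :
    Function.Injective (embed s) := by
  rw [← LinearMap.ker_eq_bot, LinearMap.ker_eq_bot']
  refine fun x hx => eq_zero_of_taylorCoeff_eq_zero hs hsc x (funext fun n => ?_)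
  simpa using congrFun ((embed_eqOn_eval_iff s x 0).1 fun z _ => by simp [hx]) n

lemma embed_eq_of_eqOn {s : Set ℕ} {x y : ℓ²(ℕ ⊕ ℕ, ℂ)}
    (h : ∀ z ∈ ball (0 : ℂ) 1, embed s x z = embed s y z) : embed s x = embed s y := by
  ext z
  by_cases hz : z ∈ ball (0 : ℂ) 1
  · exact h z hz
  · simp [embed, indicator_of_notMem hz]

lemma norm_embed_le (s : Set ℕ) (x : ℓ²(ℕ ⊕ ℕ, ℂ)) {r : ℝ} (hr : r < 1) {z : ℂ} (hz : ‖z‖ ≤ r) :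
    ‖embed s x z‖ ≤ 3 / (1 - r) ^ 2 * ‖x‖ := by
  rw [embed_apply s x (mem_ball_zero_iff.2 (hz.trans_lt hr))]
  refine (norm_ofScalars_sum_le (norm_taylorCoeff_le s (lp.norm_apply_le_norm two_ne_zero x))
    hr hz).trans_eq ?_
  ring

lemma exists_embed_eqOn_eval {s : Set ℕ} (hs : s.Infinite) (hsc : sᶜ.Infinite)
    {x : ℓ²(ℕ ⊕ ℕ, ℂ)} (hx : {i | x i ≠ 0}.Finite) :
    ∃ p : Polynomial ℂ, ∀ z ∈ ball (0 : ℂ) 1, embed s x z = p.eval z := by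
  obtain ⟨p, hp⟩ :=
    Polynomial.exists_coeff_eq_of_eventually_eq_zero (eventually_taylorCoeff_eq_zero hs hsc hx)
  exact ⟨p, (embed_eqOn_eval_iff s x p).2 hp.symm⟩

lemma witness_notMem_closure {s : Set ℕ} (hs : s.Infinite) (hsc : sᶜ.Infinite) :
    witness ∉ closure {y | ∃ p : Polynomial ℂ, (∀ n, n ∉ s → p.coeff n = 0) ∧
      ∀ z ∈ ball (0 : ℂ) 1, embed s y z = p.eval z} := by
  rw [Metric.mem_closure_iff, not_forall]
  refine ⟨1, fun h => ?_⟩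
  obtain ⟨y, ⟨p, hps, hpy⟩, hdist⟩ := h one_pos
  obtain ⟨hin, hout⟩ := (taylorCoeff_eq_iff hs hsc y _).1 ((embed_eqOn_eval_iff s y p).1 hpy)
  refine (one_le_dist_witness y ?_ ?_).not_gt hdist
  · ext k
    rw [hout, Function.comp_apply, hps _ (Nat.nth_mem_of_infinite (p := (· ∉ s)) hsc k)]
    rfl
  · rw [hin]
    exact (Nat.nth_strictMono hs).tendsto_atTop.eventually p.eventually_coeff_eq_zero

end TaylorSupport

end

open TaylorSupport in
/-- For any `I ⊆ ℤ⁺` with `I` and its complement infinite, there is a Hilbert holomorphic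
function space on the unit disk in which the polynomials are dense, but the polynomials with
Taylor support in `I` are not dense in the functions of `H` with Taylor support in `I`. -/
theorem stmt17 (I : Set ℕ) (hI : I.Infinite) (hIc : Iᶜ.Infinite) :
    ∃ (H : Type) (_ : NormedAddCommGroup H) (_ : InnerProductSpace ℂ H) (_ : CompleteSpace H)
      (ι : H →ₗ[ℂ] (ℂ → ℂ)),
      (∀ h : H, DifferentiableOn ℂ (ι h) (ball (0 : ℂ) 1)) ∧
      (∀ h₁ h₂ : H, (∀ z ∈ ball (0 : ℂ) 1, ι h₁ z = ι h₂ z) → h₁ = h₂) ∧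
      (∀ K : Set ℂ, IsCompact K → K ⊆ ball (0 : ℂ) 1 →
        ∃ C : ℝ, ∀ h : H, ∀ z ∈ K, ‖ι h z‖ ≤ C * ‖h‖) ∧
      (∀ p : Polynomial ℂ, ∃ h : H, ∀ z ∈ ball (0 : ℂ) 1, ι h z = p.eval z) ∧
      Dense {h : H | ∃ p : Polynomial ℂ, ∀ z ∈ ball (0 : ℂ) 1, ι h z = p.eval z} ∧
      -- a function with Taylor support in `I` not approximable by polynomials supported in `I`
      ∃ (f : H) (a : ℕ → ℂ),
        (∀ z ∈ ball (0 : ℂ) 1, HasSum (fun n => a n * z ^ n) (ι f z)) ∧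
        (∀ n, n ∉ I → a n = 0) ∧
        f ∉ closure {h : H | ∃ p : Polynomial ℂ,
          (∀ n, n ∉ I → p.coeff n = 0) ∧ ∀ z ∈ ball (0 : ℂ) 1, ι h z = p.eval z} := by
  refine ⟨ℓ²(ℕ ⊕ ℕ, ℂ), inferInstance, inferInstance, inferInstance, embed I,
    fun x => ?_, fun x y h => embed_injective hI hIc (embed_eq_of_eqOn h), fun K hK hKb => ?_,
    fun p => ?_, (lp.dense_finite_support (p := 2) ENNReal.ofNat_ne_top).mono
      fun x hx => exists_embed_eqOn_eval hI hIc hx,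
    witness, taylorCoeff I witness, fun z hz => ?_,
    fun n hn => taylorCoeff_witness_of_notMem I hn, witness_notMem_closure hI hIc⟩
  · exact (differentiableOn_ofScalars_sum (one_le_radius_taylorCoeff I x)).congr
      fun z hz => embed_apply I x hz
  · obtain ⟨r, hr, hKr⟩ := exists_lt_subset_ball hK.isClosed hKb
    exact ⟨3 / (1 - r) ^ 2, fun x z hz => norm_embed_le I x hr (mem_ball_zero_iff.1 (hKr hz)).le⟩
  · obtain ⟨x, hx⟩ := exists_taylorCoeff_eq_coeff hI hIc p
    exact ⟨x, (embed_eqOn_eval_iff I x p).2 hx⟩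
  · rw [embed_apply I witness hz]
    exact hasSum_ofScalars_sum (one_le_radius_taylorCoeff I witness) hz
end

section
/- There exists a Hilbert space H continuously embedded in L²(𝕋) such that H contains all trigonometric polynomials, the trigonometric polynomials are dense in H, but the holomorphic polynomials (finite linear combinations of e^{int}, n ≥ 0) are not dense in H ∩ H², where H² is the Hardy space viewed as a closed subspace of L²(𝕋). -/
/-!
Let `H` be the closed span, in `ℓ²(ℤ) ⊕ ℓ²(ℕ)`, of the vectors `x n = (e n, h n)` with hidden
parts `h k = 2 ^ k r k` for `k ≥ 0` and `h (-(j + 1)) = 2 ^ (j + 1) (r 0 + ⋯ + r j)`, and let `ι`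
be the first projection followed by the Fourier isometry `ℓ²(ℤ) ≃ L²(𝕋)`.

On every `x n`, hence on `H`, the hidden increment `v (r m) - v (r (m + 1))` is a fixed
combination of three visible coordinates. So a vector of `H` with no visible part has constant,
hence zero, hidden coordinates: `ι` is injective.

The vector `f = (∑ₖ 2⁻ᵏ e k, 0)` lies in `H`: in `∑_{k ≤ j} 2⁻ᵏ x k - 2⁻⁽ʲ⁺¹⁾ x (-(j + 1))` the
hidden parts cancel, and the visible part differs from a partial sum of `f` by
`2⁻⁽ʲ⁺¹⁾ e (-(j + 1))`. But the functional `v ↦ v (r 0) - v (e 0)` vanishes on `x k` for `k ≥ 0`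
and equals `-1` at `f`, so `f ∈ H ∩ H²` is not a limit of holomorphic polynomials.
-/

open MeasureTheory AddCircle
open scoped InnerProductSpace Real lp
open Submodule (span)

section General

variable {𝕜 E F : Type*} [Semiring 𝕜] [AddCommGroup E] [Module 𝕜 E] [TopologicalSpace E]
  [ContinuousAdd E] [ContinuousConstSMul 𝕜 E]

theorem ContinuousLinearMap.map_eq_zero_of_mem_topologicalClosure_span [AddCommGroup F]
    [Module 𝕜 F] [TopologicalSpace F] [T1Space F] {φ : E →L[𝕜] F} {s : Set E}
    (hs : ∀ v ∈ s, φ v = 0) {v : E} (hv : v ∈ (span 𝕜 s).topologicalClosure) : φ v = 0 :=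
  (span 𝕜 s).topologicalClosure_minimal (Submodule.span_le.2 fun v hv ↦ hs v hv)
    φ.isClosed_ker hv

theorem Submodule.dense_span_range_of_span_coe_eq {ι : Type*} {K : Submodule 𝕜 E}
    (x : ι → K.topologicalClosure) (hx : span 𝕜 (Set.range fun i ↦ (x i : E)) = K) :
    Dense (span 𝕜 (Set.range x) : Set K.topologicalClosure) := by
  rw [Subtype.dense_iff]
  change _ ⊆ closure (K.topologicalClosure.subtype '' _)
  rw [← Submodule.map_coe, Submodule.map_span, ← Set.range_comp, K.topologicalClosure_coe]
  exact closure_mono hx.ge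

end General

theorem lp.eq_zero_of_forall_apply_succ_eq {E : Type*} [NormedAddCommGroup E] {p : ENNReal}
    (hp : 0 < p.toReal) (a : lp (fun _ : ℕ ↦ E) p) (ha : ∀ m, a (m + 1) = a m) : a = 0 := by
  have hconst : ∀ m, a m = a 0 := fun m ↦ by
    induction m with
    | zero => rfl
    | succ m ih => rw [ha, ih]
  have hsum := (lp.memℓp a).summable hp
  simp only [hconst] at hsum
  have h0 : a 0 = 0 := by
    simpa [Real.rpow_eq_zero (norm_nonneg _) hp.ne'] using (summable_const_iff _).1 hsum
  ext m
  rw [hconst, h0]; rfl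

namespace HardyCounterexample

noncomputable section

/-- The first factor carries the Fourier coefficients; the second is invisible to `L²(𝕋)`. -/
abbrev Ambient : Type := WithLp 2 (ℓ²(ℤ, ℂ) × ℓ²(ℕ, ℂ))

def hidden : ℤ → ℓ²(ℕ, ℂ)
  | (k : ℕ) => (2 : ℂ) ^ k • lp.single 2 k 1
  | .negSucc j => (2 : ℂ) ^ (j + 1) • ∑ m ∈ Finset.range (j + 1), lp.single 2 m 1

def mode (n : ℤ) : Ambient := WithLp.toLp 2 (lp.single 2 n 1, hidden n)

def H : Submodule ℂ Ambient := (span ℂ (Set.range mode)).topologicalClosure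

instance : CompleteSpace H :=
  (span ℂ (Set.range mode)).isClosed_topologicalClosure.completeSpace_coe

theorem mode_mem_H (n : ℤ) : mode n ∈ H :=
  (span ℂ _).le_topologicalClosure (Submodule.subset_span (Set.mem_range_self n))

theorem hidden_natCast_apply (k t : ℕ) : hidden k t = if t = k then 2 ^ k else 0 := by
  simp [hidden, Pi.single_apply]

theorem hidden_negSucc_apply (j t : ℕ) :
    hidden (.negSucc j) t = if t ≤ j then 2 ^ (j + 1) else 0 := by
  rw [hidden, lp.coeFn_smul, lp.coeFn_sum]
  simp [Finset.sum_apply, Pi.single_apply]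

def fstCoord (n : ℤ) : Ambient →L[ℂ] ℂ := lp.evalCLM ℂ _ 2 n ∘L WithLp.fstL 2 ℂ _ _

def sndCoord (m : ℕ) : Ambient →L[ℂ] ℂ := lp.evalCLM ℂ _ 2 m ∘L WithLp.sndL 2 ℂ _ _

def relation (m : ℕ) : Ambient →L[ℂ] ℂ :=
  sndCoord m - sndCoord (m + 1) - (2 : ℂ) ^ m • fstCoord m
    + (2 : ℂ) ^ (m + 1) • fstCoord (m + 1 : ℕ) - (2 : ℂ) ^ (m + 1) • fstCoord (.negSucc m)

theorem relation_apply (m : ℕ) (v : Ambient) : relation m v = v.snd m - v.snd (m + 1)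
    - 2 ^ m * v.fst m + 2 ^ (m + 1) * v.fst (m + 1 : ℕ) - 2 ^ (m + 1) * v.fst (.negSucc m) :=
  rfl

theorem mode_fst_apply (n t : ℤ) : (mode n).fst t = if t = n then 1 else 0 := by
  simp [mode, Pi.single_apply]

theorem mode_snd (n : ℤ) : (mode n).snd = hidden n := rfl

theorem relation_mode (m : ℕ) (n : ℤ) : relation m (mode n) = 0 := by
  rw [relation_apply, mode_snd]
  simp only [mode_fst_apply]
  cases n with
  | ofNat k =>
    rw [Int.ofNat_eq_natCast, hidden_natCast_apply, hidden_natCast_apply]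
    grind
  | negSucc j =>
    rw [hidden_negSucc_apply, hidden_negSucc_apply]
    grind

theorem eq_zero_of_mem_H_of_fst_eq_zero {v : Ambient} (hv : v ∈ H) (hfst : v.fst = 0) :
    v = 0 := by
  have hsnd : v.snd = 0 := by
    refine lp.eq_zero_of_forall_apply_succ_eq (by norm_num) _ fun m ↦ ?_
    have h : v.snd m - v.snd (m + 1) = 0 := by
      simpa [relation_apply, hfst] using (relation m).map_eq_zero_of_mem_topologicalClosure_span
        (by rintro _ ⟨n, rfl⟩; exact relation_mode m n) hv
    linear_combination -h
  exact WithLp.ofLp_injective 2 (Prod.ext hfst hsnd)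

def geom : ℓ²(ℤ, ℂ) := ∑' k : ℕ, (2 : ℂ)⁻¹ ^ k • lp.single 2 (k : ℤ) 1

theorem hasSum_geom :
    HasSum (fun k : ℕ ↦ (2 : ℂ)⁻¹ ^ k • lp.single 2 (k : ℤ) (1 : ℂ)) geom := by
  refine (Summable.of_norm ?_).hasSum
  simpa [norm_smul, lp.norm_single] using summable_geometric_two

theorem hasSum_geom_apply (n : ℤ) :
    HasSum (fun k : ℕ ↦ if n = k then (2 : ℂ)⁻¹ ^ k else 0) (geom n) := by
  simpa [lp.evalCLM, Pi.single_apply] using hasSum_geom.mapL (lp.evalCLM ℂ _ 2 n)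

theorem geom_apply_zero : geom 0 = 1 := by
  refine (hasSum_geom_apply 0).unique ?_
  convert hasSum_ite_eq 0 (1 : ℂ) using 2 with k
  by_cases hk : k = 0 <;> simp [hk, eq_comm]

theorem geom_apply_of_neg {n : ℤ} (hn : n < 0) : geom n = 0 :=
  (hasSum_geom_apply n).unique (by simp [show ∀ k : ℕ, n ≠ k by omega])

def geomVec : Ambient := WithLp.toLp 2 (geom, 0)

def geomApprox (j : ℕ) : Ambient :=
  ∑ k ∈ Finset.range (j + 1), (2 : ℂ)⁻¹ ^ k • mode k
    - (2 : ℂ)⁻¹ ^ (j + 1) • mode (.negSucc j)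

theorem geomApprox_eq (j : ℕ) : geomApprox j = WithLp.toLp 2
    (∑ k ∈ Finset.range (j + 1), (2 : ℂ)⁻¹ ^ k • lp.single 2 (k : ℤ) 1
      - (2 : ℂ)⁻¹ ^ (j + 1) • lp.single 2 (.negSucc j) 1, 0) := by
  simp only [geomApprox, mode, ← WithLp.toLp_smul, ← WithLp.toLp_sum, ← WithLp.toLp_sub]
  congr 1
  ext1
  · simp [Prod.fst_sum]
  · simp [Prod.snd_sum, hidden, smul_smul]

theorem geomApprox_mem_span (j : ℕ) : geomApprox j ∈ span ℂ (Set.range mode) := by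
  refine Submodule.sub_mem _ (Submodule.sum_mem _ fun k _ ↦ ?_) ?_ <;>
    exact Submodule.smul_mem _ _ (Submodule.subset_span (Set.mem_range_self _))

theorem tendsto_geomApprox : Filter.Tendsto geomApprox Filter.atTop (nhds geomVec) := by
  have hpartial := hasSum_geom.tendsto_sum_nat.comp (Filter.tendsto_add_atTop_nat 1)
  have hsmall : Filter.Tendsto
      (fun j : ℕ ↦ (2 : ℂ)⁻¹ ^ (j + 1) • (lp.single 2 (Int.negSucc j) 1 : ℓ²(ℤ, ℂ)))
      Filter.atTop (nhds 0) := by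
    rw [tendsto_zero_iff_norm_tendsto_zero]
    simpa [Function.comp_def, norm_smul, lp.norm_single] using
      (tendsto_pow_atTop_nhds_zero_of_lt_one (r := (2 : ℝ)⁻¹) (by norm_num) (by norm_num)).comp
        (Filter.tendsto_add_atTop_nat 1)
  have := ((WithLp.prod_continuous_toLp 2 _ _).tendsto _).comp
    ((hpartial.sub hsmall).prodMk_nhds (tendsto_const_nhds (x := (0 : ℓ²(ℕ, ℂ)))))
  rw [show geomApprox = _ from funext geomApprox_eq]
  simpa [Function.comp_def, geomVec] using this

theorem geomVec_mem_H : geomVec ∈ H := by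
  rw [← SetLike.mem_coe, H, Submodule.topologicalClosure_coe]
  exact mem_closure_of_tendsto tendsto_geomApprox (.of_forall geomApprox_mem_span)

def witness : Ambient →L[ℂ] ℂ := sndCoord 0 - fstCoord 0

theorem witness_apply (v : Ambient) : witness v = v.snd 0 - v.fst 0 := rfl

theorem witness_mode {n : ℤ} (hn : 0 ≤ n) : witness (mode n) = 0 := by
  lift n to ℕ using hn
  rw [witness_apply, mode_snd, hidden_natCast_apply, mode_fst_apply]
  by_cases hn : n = 0 <;> simp [hn, eq_comm]

theorem witness_geomVec : witness geomVec = -1 := by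
  simp [witness_apply, geomVec, geom_apply_zero]

variable [Fact (0 < 2 * π)]

def toL2 : Ambient →L[ℂ] Lp ℂ 2 (@haarAddCircle (2 * π) _) :=
  ((@fourierBasis (2 * π) _).repr.symm.toContinuousLinearEquiv : ℓ²(ℤ, ℂ) →L[ℂ] _) ∘L
    WithLp.fstL 2 ℂ _ _

theorem toL2_apply (v : Ambient) : toL2 v = (@fourierBasis (2 * π) _).repr.symm v.fst := rfl

theorem toL2_mode (n : ℤ) : toL2 (mode n) = fourierLp 2 n := by
  rw [toL2_apply, mode, WithLp.toLp_fst, HilbertBasis.repr_symm_single, coe_fourierBasis]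

theorem inner_fourierLp_toL2 (n : ℤ) (v : Ambient) :
    ⟪(fourierLp 2 n : Lp ℂ 2 (@haarAddCircle (2 * π) _)), toL2 v⟫_ℂ = v.fst n := by
  rw [← coe_fourierBasis, ← HilbertBasis.repr_apply_apply, toL2_apply,
    LinearIsometryEquiv.apply_symm_apply]

theorem injective_toL2_comp_subtype : Function.Injective (toL2 ∘L H.subtypeL) := by
  refine (injective_iff_map_eq_zero _).2 fun h hh ↦ Subtype.ext ?_
  refine eq_zero_of_mem_H_of_fst_eq_zero h.2 ?_
  simpa [toL2_apply] using hh

end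

end HardyCounterexample

open HardyCounterexample in
/-- There is a Hilbert space `H` continuously embedded in `L²(𝕋)` containing the trigonometric
polynomials densely, such that the holomorphic polynomials are not dense in `H ∩ H²`. -/
theorem stmt18 [Fact (0 < 2 * π)] :
    ∃ (H : Type) (_ : NormedAddCommGroup H) (_ : InnerProductSpace ℂ H) (_ : CompleteSpace H)
      (ι : H →L[ℂ] Lp ℂ 2 (@haarAddCircle (2 * π) _)),
      Function.Injective ι ∧
      -- H contains the trigonometric polynomials
      (∀ n : ℤ, ∃ h : H, ι h = fourierLp 2 n) ∧
      -- the trigonometric polynomials are dense in H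
      Dense {h : H | ι h ∈ Submodule.span ℂ
        (Set.range (fourierLp 2 : ℤ → Lp ℂ 2 (@haarAddCircle (2 * π) _)))} ∧
      -- the holomorphic polynomials are not dense in H ∩ H²
      ∃ f : H,
        (∀ k : ℤ, k < 0 → ⟪(fourierLp 2 k : Lp ℂ 2 (@haarAddCircle (2 * π) _)), ι f⟫_ℂ = 0) ∧
        f ∉ closure {h : H | ι h ∈ Submodule.span ℂ
          ((fourierLp 2 : ℤ → Lp ℂ 2 (@haarAddCircle (2 * π) _)) '' {n : ℤ | 0 ≤ n})} := by
  set ι := toL2 ∘L H.subtypeL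
  let x : ℤ → H := fun n ↦ ⟨mode n, mode_mem_H n⟩
  have hιx (n : ℤ) : ι (x n) = fourierLp 2 n := toL2_mode n
  have hspan (S : Set ℤ) : {h : H | ι h ∈ span ℂ (fourierLp 2 '' S)} = span ℂ (x '' S) := by
    have himage : fourierLp 2 '' S = ι '' (x '' S) := by
      rw [Set.image_image]; simp only [hιx]
    ext h
    rw [Set.mem_ofPred_eq, himage, SetLike.mem_coe]
    exact Submodule.apply_mem_span_image_iff_mem_span (f := ι.toLinearMap)
      injective_toL2_comp_subtype
  refine ⟨H, inferInstance, inferInstance, inferInstance, ι, injective_toL2_comp_subtype,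
    fun n ↦ ⟨x n, hιx n⟩, ?_, ⟨geomVec, geomVec_mem_H⟩, fun k hk ↦ ?_, ?_⟩
  · rw [← Set.image_univ, hspan, Set.image_univ]
    exact Submodule.dense_span_range_of_span_coe_eq x rfl
  · simpa [ι, inner_fourierLp_toL2, geomVec] using geom_apply_of_neg hk
  · rw [hspan, ← Submodule.topologicalClosure_coe, SetLike.mem_coe]
    intro hf
    have := (witness ∘L H.subtypeL).map_eq_zero_of_mem_topologicalClosure_span
      (by rintro _ ⟨n, hn, rfl⟩; exact witness_mode hn) hf
    simp [witness_geomVec] at this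
end
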